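/- For nonempty compact convex A, B ⊆ ℝⁿ and λ ≥ 0: A = B + B_λ if and only if h_A = h_B + λ on the unit sphere, and either condition implies B = A_{−λ} = {t : t + B_λ ⊆ A}. -/

import Mathlib

open scoped RealInnerProductSpace Pointwise

noncomputable section

/-- The support function of a subset of ℝⁿ. -/
def suppFn {n : ℕ} (A : Set (EuclideanSpace ℝ (Fin n)))
    (x : EuclideanSpace ℝ (Fin n)) : ℝ :=
  sSup ((fun a => ⟪a, x⟫) '' A)

/-- The inner parallel body of `A` at distance `lam`:
`A₋λ = {t | t + B_λ ⊆ A}`. -/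
def innerParallel {n : ℕ} (A : Set (EuclideanSpace ℝ (Fin n))) (lam : ℝ) :
    Set (EuclideanSpace ℝ (Fin n)) :=
  {t | ∀ b ∈ Metric.closedBall (0 : EuclideanSpace ℝ (Fin n)) lam, t + b ∈ A}

/-- The set of distances at which `A` has a regular inner parallel body. -/
def regSet {n : ℕ} (A : Set (EuclideanSpace ℝ (Fin n))) : Set ℝ :=
  {lam | 0 ≤ lam ∧ A = innerParallel A lam + Metric.closedBall 0 lam}

/-- A convex body is irreducible if it has no non-trivial regular inner
parallel body. -/
def IrredBody {n : ℕ} (B : Set (EuclideanSpace ℝ (Fin n))) : Prop :=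
  ∀ lam : ℝ, 0 ≤ lam →
    B = innerParallel B lam + Metric.closedBall 0 lam → lam = 0

/-!
Support functions are additive under Minkowski sums and positively homogeneous, with
`h_{B_λ} = λ‖·‖`; hence `A = B + B_λ` forces `h_A = h_B + λ` on the unit sphere, and conversely
the values on the sphere determine `h_A` everywhere, which by Hahn–Banach separation determines
the compact convex set `A`. Separation also gives `B = A₋λ`: a point `t ∉ B` separated from `B` by
a direction `v` cannot have `t + λ v / ‖v‖` in `B + B_λ`.
-/

section

variable {n : ℕ} {A B : Set (EuclideanSpace ℝ (Fin n))} {lam : ℝ}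

lemma exists_mem_closedBall_inner_eq (hlam : 0 ≤ lam) (v : EuclideanSpace ℝ (Fin n)) :
    ∃ w ∈ Metric.closedBall (0 : EuclideanSpace ℝ (Fin n)) lam, ⟪w, v⟫ = lam * ‖v‖ := by
  rcases eq_or_ne v 0 with rfl | hv
  · exact ⟨0, Metric.mem_closedBall_self hlam, by simp⟩
  have hvn : 0 < ‖v‖ := norm_pos_iff.2 hv
  refine ⟨(lam / ‖v‖) • v, ?_, ?_⟩
  · rw [mem_closedBall_zero_iff, norm_smul, Real.norm_of_nonneg (by positivity),
      div_mul_cancel₀ _ hvn.ne']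
  · rw [real_inner_smul_left, real_inner_self_eq_norm_sq]
    field_simp

lemma exists_forall_inner_lt_of_notMem (hBconv : Convex ℝ B) (hBclosed : IsClosed B)
    {t : EuclideanSpace ℝ (Fin n)} (ht : t ∉ B) :
    ∃ (v : EuclideanSpace ℝ (Fin n)) (u : ℝ), (∀ b ∈ B, ⟪b, v⟫ < u) ∧ u < ⟪t, v⟫ := by
  obtain ⟨f, u, hfB, hft⟩ := geometric_hahn_banach_closed_point hBconv hBclosed ht
  have hf : ∀ y, ⟪y, (InnerProductSpace.toDual ℝ _).symm f⟫ = f y := fun y => by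
    rw [real_inner_comm, InnerProductSpace.toDual_symm_apply]
  exact ⟨_, u, fun b hb => (hf b).symm ▸ hfB b hb, (hf t).symm ▸ hft⟩

lemma bddAbove_image_inner (hA : Bornology.IsBounded A) (x : EuclideanSpace ℝ (Fin n)) :
    BddAbove ((fun a => ⟪a, x⟫) '' A) :=
  ((hA.isCompact_closure.image (continuous_id.inner continuous_const)).bddAbove).mono
    (Set.image_mono subset_closure)

lemma inner_le_suppFn (hA : Bornology.IsBounded A) {a : EuclideanSpace ℝ (Fin n)} (ha : a ∈ A)
    (x : EuclideanSpace ℝ (Fin n)) : ⟪a, x⟫ ≤ suppFn A x :=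
  le_csSup (bddAbove_image_inner hA x) ⟨a, ha, rfl⟩

lemma suppFn_le (hA : A.Nonempty) {x : EuclideanSpace ℝ (Fin n)} {c : ℝ}
    (h : ∀ a ∈ A, ⟪a, x⟫ ≤ c) : suppFn A x ≤ c :=
  csSup_le (hA.image _) (by rintro _ ⟨a, ha, rfl⟩; exact h a ha)

lemma suppFn_zero (hA : A.Nonempty) : suppFn A 0 = 0 := by
  simp only [suppFn, inner_zero_right, hA.image_const, csSup_singleton]

lemma suppFn_smul {c : ℝ} (hc : 0 ≤ c) (x : EuclideanSpace ℝ (Fin n)) :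
    suppFn A (c • x) = c * suppFn A x := by
  have h : (fun a => ⟪a, c • x⟫) '' A = c • ((fun a => ⟪a, x⟫) '' A) := by
    rw [← Set.image_smul, ← Set.image_comp]
    exact Set.image_congr fun a _ => real_inner_smul_right a x c
  rw [suppFn, h, Real.sSup_smul_of_nonneg hc, smul_eq_mul, suppFn]

lemma suppFn_add (hAne : A.Nonempty) (hA : Bornology.IsBounded A) (hBne : B.Nonempty)
    (hB : Bornology.IsBounded B) (x : EuclideanSpace ℝ (Fin n)) :
    suppFn (A + B) x = suppFn A x + suppFn B x := by
  apply le_antisymm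
  · apply suppFn_le (hAne.add hBne)
    rintro _ ⟨a, ha, b, hb, rfl⟩
    rw [inner_add_left]
    exact add_le_add (inner_le_suppFn hA ha x) (inner_le_suppFn hB hb x)
  · rw [← le_sub_iff_add_le]
    apply suppFn_le hAne fun a ha => ?_
    rw [le_sub_iff_add_le, add_comm, ← le_sub_iff_add_le]
    apply suppFn_le hBne fun b hb => ?_
    rw [le_sub_iff_add_le, add_comm, ← inner_add_left]
    exact inner_le_suppFn (hA.add hB) (Set.add_mem_add ha hb) x

lemma inner_le_mul_norm_of_mem_closedBall {a : EuclideanSpace ℝ (Fin n)}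
    (ha : a ∈ Metric.closedBall 0 lam) (x : EuclideanSpace ℝ (Fin n)) : ⟪a, x⟫ ≤ lam * ‖x‖ :=
  calc ⟪a, x⟫ ≤ ‖a‖ * ‖x‖ := real_inner_le_norm a x
    _ ≤ lam * ‖x‖ := by gcongr; exact mem_closedBall_zero_iff.1 ha

lemma suppFn_closedBall (hlam : 0 ≤ lam) (x : EuclideanSpace ℝ (Fin n)) :
    suppFn (Metric.closedBall 0 lam) x = lam * ‖x‖ := by
  apply le_antisymm
  · exact suppFn_le ⟨0, Metric.mem_closedBall_self hlam⟩ fun a ha =>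
      inner_le_mul_norm_of_mem_closedBall ha x
  · obtain ⟨w, hw, hwx⟩ := exists_mem_closedBall_inner_eq hlam x
    exact hwx ▸ inner_le_suppFn Metric.isBounded_closedBall hw x

lemma suppFn_add_closedBall (hBne : B.Nonempty) (hB : Bornology.IsBounded B) (hlam : 0 ≤ lam)
    (x : EuclideanSpace ℝ (Fin n)) :
    suppFn (B + Metric.closedBall 0 lam) x = suppFn B x + lam * ‖x‖ := by
  rw [suppFn_add hBne hB ⟨0, Metric.mem_closedBall_self hlam⟩ Metric.isBounded_closedBall,
    suppFn_closedBall hlam]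

lemma suppFn_eq_add_mul_norm_of_sphere (hAne : A.Nonempty) (hBne : B.Nonempty)
    (h : ∀ x : EuclideanSpace ℝ (Fin n), ‖x‖ = 1 → suppFn A x = suppFn B x + lam)
    (x : EuclideanSpace ℝ (Fin n)) : suppFn A x = suppFn B x + lam * ‖x‖ := by
  rcases eq_or_ne x 0 with rfl | hx
  · simp [suppFn_zero hAne, suppFn_zero hBne]
  have hxn : 0 < ‖x‖ := norm_pos_iff.2 hx
  have hu : ‖‖x‖⁻¹ • x‖ = 1 := by rw [norm_smul, norm_inv, norm_norm, inv_mul_cancel₀ hxn.ne']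
  have hx' : ‖x‖ • (‖x‖⁻¹ • x) = x := by rw [smul_smul, mul_inv_cancel₀ hxn.ne', one_smul]
  calc suppFn A x = ‖x‖ * suppFn A (‖x‖⁻¹ • x) := by rw [← suppFn_smul hxn.le, hx']
    _ = suppFn B (‖x‖ • (‖x‖⁻¹ • x)) + lam * ‖x‖ := by
      rw [h _ hu, suppFn_smul hxn.le]
      ring
    _ = suppFn B x + lam * ‖x‖ := by rw [hx']

lemma subset_of_suppFn_le (hA : Bornology.IsBounded A) (hBne : B.Nonempty)
    (hBconv : Convex ℝ B) (hBclosed : IsClosed B) (h : ∀ x, suppFn A x ≤ suppFn B x) :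
    A ⊆ B := by
  intro a ha
  by_contra haB
  obtain ⟨v, u, hBv, hav⟩ := exists_forall_inner_lt_of_notMem hBconv hBclosed haB
  have := suppFn_le hBne fun b hb => (hBv b hb).le
  linarith [inner_le_suppFn hA ha v, h v]

lemma eq_of_suppFn_eq (hAne : A.Nonempty) (hAcomp : IsCompact A) (hAconv : Convex ℝ A)
    (hBne : B.Nonempty) (hBcomp : IsCompact B) (hBconv : Convex ℝ B)
    (h : ∀ x, suppFn A x = suppFn B x) : A = B :=
  (subset_of_suppFn_le hAcomp.isBounded hBne hBconv hBcomp.isClosed fun x => (h x).le).antisymm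
    (subset_of_suppFn_le hBcomp.isBounded hAne hAconv hAcomp.isClosed fun x => (h x).ge)

lemma innerParallel_add_closedBall (hBconv : Convex ℝ B) (hBclosed : IsClosed B)
    (hlam : 0 ≤ lam) : innerParallel (B + Metric.closedBall 0 lam) lam = B := by
  refine Set.Subset.antisymm (fun t ht => ?_) fun t ht w hw => Set.add_mem_add ht hw
  by_contra htB
  obtain ⟨v, u, hBv, htv⟩ := exists_forall_inner_lt_of_notMem hBconv hBclosed htB
  obtain ⟨w, hw, hwv⟩ := exists_mem_closedBall_inner_eq hlam v
  obtain ⟨b, hb, c, hc, hbc : b + c = t + w⟩ := ht w hw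
  -- `t + w = b + c` with `⟪w, v⟫ = λ‖v‖ ≥ ⟪c, v⟫` forces `⟪t, v⟫ ≤ ⟪b, v⟫`.
  have hsum : ⟪b, v⟫ + ⟪c, v⟫ = ⟪t, v⟫ + ⟪w, v⟫ := by
    rw [← inner_add_left, ← inner_add_left, hbc]
  linarith [hBv b hb, inner_le_mul_norm_of_mem_closedBall hc v]

end

theorem stmt16 {n : ℕ} (A B : Set (EuclideanSpace ℝ (Fin n)))
    (hAne : A.Nonempty) (hAcomp : IsCompact A) (hAconv : Convex ℝ A)
    (hBne : B.Nonempty) (hBcomp : IsCompact B) (hBconv : Convex ℝ B)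
    (lam : ℝ) (hlam : 0 ≤ lam) :
    (A = B + Metric.closedBall 0 lam ↔
      ∀ x : EuclideanSpace ℝ (Fin n), ‖x‖ = 1 → suppFn A x = suppFn B x + lam) ∧
    (A = B + Metric.closedBall 0 lam → B = innerParallel A lam) := by
  have hsum := suppFn_add_closedBall hBne hBcomp.isBounded hlam
  refine ⟨⟨?_, fun h => ?_⟩, ?_⟩
  · rintro rfl x hx
    rw [hsum, hx, mul_one]
  · refine eq_of_suppFn_eq hAne hAcomp hAconv
      (hBne.add ⟨0, Metric.mem_closedBall_self hlam⟩) (hBcomp.add (isCompact_closedBall _ _))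
      (hBconv.add (convex_closedBall _ _)) fun x => ?_
    rw [hsum, suppFn_eq_add_mul_norm_of_sphere hAne hBne h]
  · rintro rfl
    exact (innerParallel_add_closedBall hBconv hBcomp.isClosed hlam).symm
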